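/- Let K be the field with 2ⁿ elements, φ : K → K the Frobenius x ↦ x², and β ∈ K an element such that (β, φ(β), …, φ^{n−1}(β)) is a basis of K over 𝔽₂. Define B : {0,1}ⁿ → K by B(s₁,…,sₙ) = Σ_{i=1}^{n} sᵢ·φ^{n−i}(β). Then: (i) B is a bijection; (ii) B(L(s)) = φ(B(s)) for every s, where L is the cyclic left shift; (iii) the trace Tr_{K/𝔽₂}(B(s)) equals s₁+⋯+sₙ mod 2. Consequently, B induces a bijection between binary necklaces of length n and orbits of φ on K, under which primitive necklaces of length n with an odd (resp. even) number of 1's correspond to orbits of size n whose elements have trace 1 (resp. trace 0), i.e. to monic irreducible polynomials of degree n over 𝔽₂ whose sum of roots is nonzero (resp. zero). -/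

import Mathlib

open Finset

namespace Necklaces

variable {n : ℕ}

/-- The cyclic left shift `L` on binary strings of length `n`. -/
def shiftL (s : Fin n → Bool) : Fin n → Bool :=
  fun i => s ⟨(i.val + 1) % n, Nat.mod_lt _ (Nat.lt_of_le_of_lt (Nat.zero_le _) i.isLt)⟩

/-- Digitwise inversion (complement) `ι`. -/
def inv (s : Fin n → Bool) : Fin n → Bool := fun i => !(s i)

/-- A string is primitive if no nontrivial cyclic shift fixes it. -/
def Primitive (s : Fin n → Bool) : Prop :=
  ∀ k : ℕ, 0 < k → k < n → shiftL^[k] s ≠ s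

/-- The necklace `⟨s⟩`: the orbit of `s` under cyclic shifts. -/
def necklace (s : Fin n → Bool) : Set (Fin n → Bool) :=
  {t | ∃ k : ℕ, t = shiftL^[k] s}

/-- The necklace inversion class `[s]`: the orbit of `s` under cyclic shifts and inversion. -/
def invClass (s : Fin n → Bool) : Set (Fin n → Bool) :=
  {t | ∃ k : ℕ, t = shiftL^[k] s ∨ t = inv (shiftL^[k] s)}

/-- The number of 1's in `s`. -/
def onesCard (s : Fin n → Bool) : ℕ := (univ.filter (fun i => s i = true)).card

/-- The mod-2 partial sum map `Ξ`: the `i`-th digit of `Ξ(s)` is `s₁+⋯+sᵢ (mod 2)`. -/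
def xi (s : Fin n → Bool) : Fin n → Bool :=
  fun i => decide (Odd ((Finset.Iic i).filter (fun j => s j = true)).card)

/-- `ι(s)` is a cyclic shift of `s`. -/
def ReflexiveStr (s : Fin n → Bool) : Prop := ∃ k : ℕ, shiftL^[k] s = inv s

/-- `s` consists of two copies of a primitive string of length `n/2`
with an odd number of 1's. -/
def TwoCopies (s : Fin n → Bool) : Prop :=
  n % 2 = 0 ∧ shiftL^[n / 2] s = s ∧ (∀ k : ℕ, 0 < k → k < n / 2 → shiftL^[k] s ≠ s) ∧
    Odd ((univ.filter (fun i : Fin n => i.val < n / 2 ∧ s i = true)).card)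

/-- `s` generates a necklace belonging to `Ñ⁺(n)`. -/
def GoodPlus (s : Fin n → Bool) : Prop :=
  (Primitive s ∧ Even (onesCard s)) ∨ TwoCopies s

/-- The set `Ñ⁺(n)` of necklaces. -/
def NtildePlus (n : ℕ) : Set (Set (Fin n → Bool)) :=
  {N | ∃ s : Fin n → Bool, GoodPlus s ∧ N = necklace s}

/-- The set `N̄(n)` of necklace inversion classes of primitive strings. -/
def Nbar (n : ℕ) : Set (Set (Fin n → Bool)) :=
  {C | ∃ s : Fin n → Bool, Primitive s ∧ C = invClass s}

/-- Lexicographic order on strings, with `0 < 1` and the leftmost digit most significant. -/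
def strLt (s t : Fin n → Bool) : Prop :=
  ∃ i : Fin n, (∀ j : Fin n, j < i → s j = t j) ∧ s i < t i

/-- Extended lexicographic order on extended strings `s^b`
(`b = false` encodes `−`, `b = true` encodes `+`). -/
def extLt (p q : (Fin n → Bool) × Bool) : Prop :=
  strLt p.1 q.1 ∨ (p.1 = q.1 ∧ p.2 < q.2)

/-- The twisted shift operator `F`. -/
def twistF (s : Fin n → Bool) : Fin n → Bool :=
  if h : 0 < n then
    (if shiftL s ⟨0, h⟩ = true then shiftL s else inv (shiftL s))
  else s

/-- The extended twisted shift operator `F̃`. -/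
def extF (p : (Fin n → Bool) × Bool) : (Fin n → Bool) × Bool :=
  if h : 0 < n then
    (if twistF p.1 ⟨n - 1, Nat.sub_lt h Nat.one_pos⟩ = true then (twistF p.1, p.2)
     else (twistF p.1, !p.2))
  else p

/-- Cyclic successor on `Fin n`. -/
def finSucc (i : Fin n) : Fin n :=
  ⟨(i.val + 1) % n, Nat.mod_lt _ (Nat.lt_of_le_of_lt (Nat.zero_le _) i.isLt)⟩

open scoped Classical in
/-- The (0-based) lexicographic rank of `μ i` among `μ₁,…,μₙ`:
the number of indices `j` with `μ j` strictly smaller than `μ i`. -/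
noncomputable def rankOf {X : Type*} (lt : X → X → Prop) (μ : Fin n → X) (i : Fin n) : ℕ :=
  (univ.filter (fun j => lt (μ j) (μ i))).card

/-- `σ` is the cyclic permutation `(r₁ r₂ ⋯ rₙ)` built from the ranks `rᵢ` of `μᵢ`:
`σ(rᵢ) = r_{i+1}` (indices mod `n`). -/
def BuiltFrom {X : Type*} (lt : X → X → Prop) (μ : Fin n → X) (σ : Equiv.Perm (Fin n)) : Prop :=
  ∀ i j : Fin n, rankOf lt μ i = j.val → (σ j).val = rankOf lt μ (finSucc i)

/-- `σ` consists of a single `n`-cycle. -/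
def IsCyclicPerm (σ : Equiv.Perm (Fin n)) : Prop :=
  ∀ x y : Fin n, ∃ k : ℕ, (σ ^ k) x = y

/-- `σ` is unimodal: decreasing on an initial segment, then increasing. -/
def IsUnimodal (σ : Equiv.Perm (Fin n)) : Prop :=
  ∃ m : Fin n, (∀ i j : Fin n, i ≤ j → j ≤ m → σ j ≤ σ i) ∧
    (∀ i j : Fin n, m ≤ i → i ≤ j → σ i ≤ σ j)

/-- Cyclic unimodal permutations. -/
def CUPperm (σ : Equiv.Perm (Fin n)) : Prop := IsCyclicPerm σ ∧ IsUnimodal σ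

/-- The string `A(σ)` obtained from the itinerary of `σ` (`+ ↦ 0`, `− ↦ 1`),
with the last digit chosen so that the total number of 1's is even.
(Here `m = σ⁻¹ 0` is the unique element with `σ m` least.) -/
def Astr [NeZero n] (σ : Equiv.Perm (Fin n)) : Fin n → Bool :=
  fun i =>
    if i.val + 1 < n then decide ((σ ^ (i.val + 1)) (σ⁻¹ 0) < σ⁻¹ 0)
    else decide (Odd ((univ.filter (fun j : Fin n =>
      j.val + 1 < n ∧ (σ ^ (j.val + 1)) (σ⁻¹ 0) < σ⁻¹ 0)).card))

/-- The string used for `Ψ(σ)`: itinerary digits with the last digit chosen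
so that the total number of 1's is odd. -/
def BstrOdd [NeZero n] (σ : Equiv.Perm (Fin n)) : Fin n → Bool :=
  fun i =>
    if i.val + 1 < n then decide ((σ ^ (i.val + 1)) (σ⁻¹ 0) < σ⁻¹ 0)
    else !(decide (Odd ((univ.filter (fun j : Fin n =>
      j.val + 1 < n ∧ (σ ^ (j.val + 1)) (σ⁻¹ 0) < σ⁻¹ 0)).card)))

/-- The itinerary of a cyclic unimodal permutation: `none` encodes `⋆` (position `n`),
`some true` encodes `−` (i.e. `σⁱ(m) < m`), `some false` encodes `+` (i.e. `σⁱ(m) > m`). -/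
def itin [NeZero n] (σ : Equiv.Perm (Fin n)) : Fin n → Option Bool :=
  fun i =>
    if i.val + 1 = n then none
    else some (decide ((σ ^ (i.val + 1)) (σ⁻¹ 0) < σ⁻¹ 0))

/-- `σ` arises from the class `C` by the construction defining `λ`:
for some representative `t` of `C` beginning with `1`, `σ` is the cyclic permutation
built from the lexicographic ranks of the iterates of `t` under `F` (non-reflexive case)
or of `t^−` under `F̃` (reflexive case). -/
def LamRel [NeZero n] (C : Set (Fin n → Bool)) (σ : Equiv.Perm (Fin n)) : Prop :=
  ∃ t : Fin n → Bool, t 0 = true ∧ C = invClass t ∧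
    ((¬ ReflexiveStr t ∧ BuiltFrom strLt (fun i : Fin n => twistF^[i.val] t) σ) ∨
     (ReflexiveStr t ∧ BuiltFrom extLt (fun i : Fin n => extF^[i.val] (t, false)) σ))

/-- `σ` arises from the representative `s` by the Weiss–Rogers construction `Φ`:
`σ` is the cyclic permutation built from the lexicographic ranks of
`νᵢ = ι(Ξ(L^{i-1}(s)))`. -/
def PhiBuilt (s : Fin n → Bool) (σ : Equiv.Perm (Fin n)) : Prop :=
  BuiltFrom strLt (fun i : Fin n => inv (xi (shiftL^[i.val] s))) σ

end Necklaces

namespace Necklaces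

/-- The map `B` sending a binary string to `Σᵢ sᵢ · φ^{n−i}(β)`, where `φ : x ↦ x²`
is the Frobenius. -/
def Bmap (n : ℕ) {K : Type*} [Field K] (β : K) (s : Fin n → Bool) : K :=
  ∑ i : Fin n, if s i = true then (fun x : K => x ^ 2)^[n - 1 - i.val] β else 0

/-- The orbit of `x` under the Frobenius `φ : x ↦ x²`. -/
def frobOrbit {K : Type*} [Field K] (x : K) : Set K :=
  {y | ∃ k : ℕ, y = (fun z : K => z ^ 2)^[k] x}

end Necklaces

/-!
The conjugates `φ^{n-1}(β), …, φ(β), β` form a basis of `K` over `𝔽₂` and the digits of `s` are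
exactly the coordinates of `B(s)` in it, so `B` is a linear bijection `𝔽₂ⁿ ≃ K`. Since `φⁿ = id`,
squaring permutes these conjugates cyclically, which on coordinates is the cyclic shift; hence
`B ∘ L = φ ∘ B`, and `B` carries necklaces onto Frobenius orbits, preserving their sizes.
Finally every conjugate has trace `Tr β`, and `Tr β = 1` because the trace form is nonzero while
the conjugates span `K`; so `Tr B(s)` counts the `1`s of `s` modulo `2`.
-/

namespace Function

variable {α β : Type*} {f : α → α} {x : α} {n : ℕ}

theorem minimalPeriod_eq_iff_of_isPeriodicPt (hn : 0 < n) (hx : IsPeriodicPt f n x) :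
    minimalPeriod f x = n ↔ ∀ k, 0 < k → k < n → f^[k] x ≠ x := by
  constructor
  · rintro rfl k hk hkn
    exact fun hfix => hk.ne' (IsPeriodicPt.eq_zero_of_lt_minimalPeriod hfix hkn)
  · intro hprim
    refine (hx.minimalPeriod_le hn).antisymm (not_lt.1 fun hlt => ?_)
    exact hprim _ (hx.minimalPeriod_pos hn) hlt iterate_minimalPeriod

theorem ncard_setOf_iterate (hx : x ∈ periodicPts f) :
    {y | ∃ k, y = f^[k] x}.ncard = minimalPeriod f x := by
  have horbit : {y | ∃ k, y = f^[k] x} = (f^[·] x) '' Set.Iio (minimalPeriod f x) := by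
    ext y
    constructor
    · rintro ⟨k, rfl⟩
      exact ⟨k % minimalPeriod f x, Nat.mod_lt _ (minimalPeriod_pos_of_mem_periodicPts hx),
        iterate_mod_minimalPeriod_eq⟩
    · rintro ⟨k, -, rfl⟩
      exact ⟨k, rfl⟩
  rw [horbit, iterate_injOn_Iio_minimalPeriod.ncard_image, Set.ncard_Iio_nat]

theorem Semiconj.image_setOf_iterate {g : α → β} {f' : β → β} (h : Semiconj g f f') (x : α) :
    g '' {y | ∃ k, y = f^[k] x} = {z | ∃ k, z = f'^[k] (g x)} := by
  ext z
  constructor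
  · rintro ⟨y, ⟨k, rfl⟩, rfl⟩
    exact ⟨k, (h.iterate_right k).eq x⟩
  · rintro ⟨k, rfl⟩
    exact ⟨f^[k] x, ⟨k, rfl⟩, (h.iterate_right k).eq x⟩

end Function

theorem FiniteField.trace_pow_char {K : Type*} [Field K] [Fintype K] {p : ℕ} [Fact p.Prime]
    [Algebra (ZMod p) K] (x : K) :
    Algebra.trace (ZMod p) K (x ^ p) = Algebra.trace (ZMod p) K x := by
  have h := Algebra.trace_eq_of_algEquiv (FiniteField.frobeniusAlgEquivOfAlgebraic (ZMod p) K) x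
  rwa [FiniteField.coe_frobeniusAlgEquivOfAlgebraic, ZMod.card] at h

namespace Necklaces

variable {n : ℕ}

theorem shiftL_apply [NeZero n] (s : Fin n → Bool) (i : Fin n) : shiftL s i = s (i + 1) := by
  simp only [shiftL]
  congr 1
  ext
  simp [Fin.val_add]

open Fin.NatCast in
theorem shiftL_iterate_apply [NeZero n] (k : ℕ) (s : Fin n → Bool) (i : Fin n) :
    shiftL^[k] s i = s (i + (k : Fin n)) := by
  induction k generalizing s with
  | zero => simp
  | succ k ih => rw [Function.iterate_succ_apply, ih, shiftL_apply, Nat.cast_succ, add_assoc]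

theorem isPeriodicPt_shiftL [NeZero n] (s : Fin n → Bool) : Function.IsPeriodicPt shiftL n s := by
  funext i
  simp [shiftL_iterate_apply]

theorem ncard_necklace_eq_iff_primitive [NeZero n] (s : Fin n → Bool) :
    (necklace s).ncard = n ↔ Primitive s := by
  have hper := isPeriodicPt_shiftL s
  rw [necklace, Function.ncard_setOf_iterate (Function.mk_mem_periodicPts n.pos_of_neZero hper),
    Function.minimalPeriod_eq_iff_of_isPeriodicPt n.pos_of_neZero hper, Primitive]

section Field

variable {K : Type*} [Field K] {β : K}

theorem isPeriodicPt_sq_of_card_eq [Fintype K] (hcard : Fintype.card K = 2 ^ n) (x : K) :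
    Function.IsPeriodicPt (fun z : K => z ^ 2) n x := by
  rw [Function.IsPeriodicPt, Function.IsFixedPt, pow_iterate, ← hcard]
  exact FiniteField.pow_card x

theorem iterate_sq_val_add_one [NeZero n]
    (hβ : Function.IsPeriodicPt (fun z : K => z ^ 2) n β) (k : Fin n) :
    (fun z : K => z ^ 2)^[(k + 1 : Fin n).val] β = ((fun z : K => z ^ 2)^[k.val] β) ^ 2 := by
  rw [← Function.iterate_succ_apply' (fun z : K => z ^ 2), ← hβ.iterate_mod_apply (k.val + 1)]
  congr 2
  simp [Fin.val_add]

theorem bmap_apply (s : Fin n → Bool) :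
    Bmap n β s = ∑ i, if s i then (fun z : K => z ^ 2)^[i.rev.val] β else 0 := by
  simp only [Bmap, Fin.val_rev, Nat.sub_sub, add_comm]

theorem semiconj_bmap_shiftL [NeZero n] [CharP K 2]
    (hβ : Function.IsPeriodicPt (fun z : K => z ^ 2) n β) :
    Function.Semiconj (Bmap n β) shiftL (fun x => x ^ 2) := by
  intro s
  show Bmap n β (shiftL s) = Bmap n β s ^ 2
  rw [bmap_apply, bmap_apply, sum_pow_char]
  -- reindex by `i ↦ i + 1`: squaring `φ^{rev (i + 1)} β` gives `φ^{rev (i + 1) + 1} β = φ^{rev i} β`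
  refine Fintype.sum_equiv (Equiv.addRight 1) _ _ fun i => ?_
  simp only [Equiv.coe_addRight, shiftL_apply, ite_pow, ne_eq, OfNat.ofNat_ne_zero,
    not_false_eq_true, zero_pow, ← iterate_sq_val_add_one hβ, Fin.rev_add, sub_add_cancel]

theorem frobOrbit_bmap [NeZero n] [CharP K 2]
    (hβ : Function.IsPeriodicPt (fun z : K => z ^ 2) n β) (s : Fin n → Bool) :
    frobOrbit (Bmap n β s) = Bmap n β '' necklace s :=
  ((semiconj_bmap_shiftL hβ).image_setOf_iterate s).symm

section Basis

variable [Algebra (ZMod 2) K]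

theorem bmap_eq_sum_smul_basis (bas : Module.Basis (Fin n) (ZMod 2) K)
    (hbas : ∀ i : Fin n, bas i = (fun z : K => z ^ 2)^[i.val] β) (s : Fin n → Bool) :
    Bmap n β s = ∑ i, (if s i.rev then 1 else 0 : ZMod 2) • bas i := by
  rw [bmap_apply]
  refine Fintype.sum_equiv Fin.revPerm _ _ fun i => ?_
  split_ifs <;> simp_all

theorem injective_bmap (bas : Module.Basis (Fin n) (ZMod 2) K)
    (hbas : ∀ i : Fin n, bas i = (fun z : K => z ^ 2)^[i.val] β) :
    Function.Injective (Bmap n β) := by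
  intro s t hst
  funext i
  have hi := bas.ext_elem_iff.1 hst i.rev
  rw [bmap_eq_sum_smul_basis bas hbas, bmap_eq_sum_smul_basis bas hbas, bas.repr_sum_self,
    bas.repr_sum_self, Fin.rev_rev] at hi
  revert hi
  cases s i <;> cases t i <;> decide

theorem bijective_bmap [Fintype K] (hcard : Fintype.card K = 2 ^ n)
    (bas : Module.Basis (Fin n) (ZMod 2) K)
    (hbas : ∀ i : Fin n, bas i = (fun z : K => z ^ 2)^[i.val] β) :
    Function.Bijective (Bmap n β) :=
  (Fintype.bijective_iff_injective_and_card _).2 ⟨injective_bmap bas hbas, by simp [hcard]⟩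

variable [Fintype K]

theorem trace_iterate_sq (k : ℕ) (x : K) :
    Algebra.trace (ZMod 2) K ((fun z : K => z ^ 2)^[k] x) = Algebra.trace (ZMod 2) K x := by
  induction k with
  | zero => rfl
  | succ k ih => rw [Function.iterate_succ_apply', FiniteField.trace_pow_char, ih]

theorem trace_eq_one_of_basis (bas : Module.Basis (Fin n) (ZMod 2) K)
    (hbas : ∀ i : Fin n, bas i = (fun z : K => z ^ 2)^[i.val] β) :
    Algebra.trace (ZMod 2) K β = 1 := by
  by_contra hne
  have h0 : Algebra.trace (ZMod 2) K β = 0 := (by decide : ∀ a : ZMod 2, a ≠ 1 → a = 0) _ hne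
  apply Algebra.trace_ne_zero (ZMod 2) K
  refine bas.ext fun i => ?_
  rw [hbas, trace_iterate_sq, h0, LinearMap.zero_apply]

theorem trace_bmap (htr : Algebra.trace (ZMod 2) K β = 1) (s : Fin n → Bool) :
    Algebra.trace (ZMod 2) K (Bmap n β s) = if Odd (onesCard s) then 1 else 0 := by
  have hsum : Algebra.trace (ZMod 2) K (Bmap n β s) = (onesCard s : ZMod 2) := by
    simp only [Bmap, map_sum, apply_ite, map_zero, trace_iterate_sq, htr, Finset.sum_boole]
    rfl
  split_ifs with hodd
  · rw [hsum, ZMod.natCast_eq_one_iff_odd.2 hodd]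
  · rw [hsum, ZMod.natCast_eq_zero_iff_even.2 (Nat.not_odd_iff_even.1 hodd)]

end Basis

end Field

/-- Let `K` be the field with `2ⁿ` elements, `φ : x ↦ x²` the
Frobenius, and `β ∈ K` such that `(β, φ(β), …, φ^{n−1}(β))` is a basis of `K` over `𝔽₂`.
Then: (i) `B` is a bijection; (ii) `B(L(s)) = φ(B(s))`; (iii) the trace of `B(s)` equals
the mod-2 sum of the digits of `s`. Consequently, `B` induces a bijection between binary
necklaces of length `n` and Frobenius orbits on `K`, under which primitive necklaces of
length `n` with an odd (resp. even) number of 1's correspond to orbits of size `n` whose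
elements have trace 1 (resp. trace 0), i.e. to monic irreducible polynomials of degree
`n` over `𝔽₂` whose sum of roots is nonzero (resp. zero). -/
theorem reutenauer_bijection (n : ℕ) (hn : 0 < n) (K : Type*) [Field K] [Fintype K]
    [Algebra (ZMod 2) K] (hcard : Fintype.card K = 2 ^ n) (β : K)
    (hβ : ∃ bas : Module.Basis (Fin n) (ZMod 2) K,
      ∀ i : Fin n, bas i = (fun x : K => x ^ 2)^[i.val] β) :
    Function.Bijective (Bmap n β) ∧
    (∀ s : Fin n → Bool, Bmap n β (shiftL s) = (Bmap n β s) ^ 2) ∧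
    (∀ s : Fin n → Bool,
      Algebra.trace (ZMod 2) K (Bmap n β s) = if Odd (onesCard s) then 1 else 0) ∧
    (∀ s t : Fin n → Bool,
      necklace s = necklace t ↔ frobOrbit (Bmap n β s) = frobOrbit (Bmap n β t)) ∧
    (∀ s : Fin n → Bool, (Primitive s ∧ Odd (onesCard s)) ↔
      ((frobOrbit (Bmap n β s)).ncard = n ∧ Algebra.trace (ZMod 2) K (Bmap n β s) = 1)) ∧
    (∀ s : Fin n → Bool, (Primitive s ∧ Even (onesCard s)) ↔
      ((frobOrbit (Bmap n β s)).ncard = n ∧ Algebra.trace (ZMod 2) K (Bmap n β s) = 0)) := by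
  obtain ⟨bas, hbas⟩ := hβ
  have : NeZero n := ⟨hn.ne'⟩
  have : CharP K 2 := (Algebra.charP_iff (ZMod 2) K 2).mp inferInstance
  have hper := isPeriodicPt_sq_of_card_eq hcard β
  have hbij := bijective_bmap hcard bas hbas
  have htrace (s : Fin n → Bool) := trace_bmap (trace_eq_one_of_basis bas hbas) s
  have hprim : ∀ s, (frobOrbit (Bmap n β s)).ncard = n ↔ Primitive s := fun s => by
    rw [frobOrbit_bmap hper, Set.ncard_image_of_injective _ hbij.1,
      ncard_necklace_eq_iff_primitive]
  refine ⟨hbij, semiconj_bmap_shiftL hper, htrace, fun s t => ?_, fun s => ?_, fun s => ?_⟩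
  · rw [frobOrbit_bmap hper, frobOrbit_bmap hper, (Set.image_injective.2 hbij.1).eq_iff]
  · by_cases hodd : Odd (onesCard s) <;> simp [hprim, htrace, hodd]
  · by_cases hodd : Odd (onesCard s) <;> simp [hprim, htrace, hodd, ← Nat.not_odd_iff_even]

end Necklaces
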